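/- The function x ↦ √(2π)(1 - x²) e^{x²/2} Φ(x) - x is continuous and strictly decreasing on (0, ∞), and has a unique zero β in (0, ∞), where Φ is the standard normal CDF. -/

import Mathlib

open Real Set

/-- The standard normal cumulative distribution function. -/
noncomputable def Phi (x : ℝ) : ℝ :=
  (Real.sqrt (2 * Real.pi))⁻¹ * ∫ u in Set.Iic x, Real.exp (-u ^ 2 / 2)

/-- The function whose unique positive zero defines the constant β. -/
noncomputable def psi (x : ℝ) : ℝ :=
  Real.sqrt (2 * Real.pi) * (1 - x ^ 2) * Real.exp (x ^ 2 / 2) * Phi x - x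

/-!
With `G x = √(2π) e^{x²/2} Φ x` (`scaledPhi` below) we have `G > 0`, `G' = x G + 1` and
`ψ = (1 - x²) G - x`. Then `ψ' = -x (1 + x²) G - x² < 0` for `x > 0`, so `ψ` is strictly
decreasing there; since `ψ 0 = G 0 > 0` and `ψ 1 = -1`, the intermediate value theorem gives the zero.
-/

open MeasureTheory

theorem hasDerivAt_integral_Iic {E : Type*} [NormedAddCommGroup E] [NormedSpace ℝ E]
    [CompleteSpace E] {f : ℝ → E} (hf : Integrable f) {x : ℝ} (hx : ContinuousAt f x) :
    HasDerivAt (fun y => ∫ u in Iic y, f u) (f x) x := by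
  have hsplit : (fun y => ∫ u in Iic y, f u) =
      fun y => (∫ u in Iic 0, f u) + ∫ u in (0 : ℝ)..y, f u := by
    funext y
    rw [← intervalIntegral.integral_Iic_sub_Iic hf.integrableOn hf.integrableOn]
    abel
  rw [hsplit]
  exact (intervalIntegral.integral_hasDerivAt_right hf.intervalIntegrable
    (hf.aestronglyMeasurable.stronglyMeasurableAtFilter) hx).const_add _

theorem integrable_exp_neg_sq_div_two : Integrable fun u : ℝ => exp (-u ^ 2 / 2) := by
  convert integrable_exp_neg_mul_sq (by norm_num : (0 : ℝ) < 1 / 2) using 2 with u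
  ring_nf

theorem Phi_hasDerivAt (x : ℝ) : HasDerivAt Phi ((√(2 * π))⁻¹ * exp (-x ^ 2 / 2)) x :=
  (hasDerivAt_integral_Iic integrable_exp_neg_sq_div_two (by fun_prop)).const_mul _

theorem Phi_pos (x : ℝ) : 0 < Phi x := by
  refine mul_pos (by positivity) ?_
  rw [setIntegral_pos_iff_support_of_nonneg_ae (ae_of_all _ fun u => (exp_pos _).le)
    integrable_exp_neg_sq_div_two.integrableOn]
  simp [Function.support, (exp_pos _).ne']

noncomputable def scaledPhi (x : ℝ) : ℝ := √(2 * π) * exp (x ^ 2 / 2) * Phi x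

theorem scaledPhi_pos (x : ℝ) : 0 < scaledPhi x :=
  mul_pos (by positivity) (Phi_pos x)

theorem scaledPhi_hasDerivAt (x : ℝ) : HasDerivAt scaledPhi (x * scaledPhi x + 1) x := by
  have hexp : HasDerivAt (fun y : ℝ => exp (y ^ 2 / 2)) (exp (x ^ 2 / 2) * x) x := by
    simpa using (((hasDerivAt_pow 2 x).div_const 2).exp)
  refine ((hexp.const_mul √(2 * π)).mul (Phi_hasDerivAt x)).congr_deriv ?_
  have hs : √(2 * π) ≠ 0 := by positivity
  have he : exp (x ^ 2 / 2) * exp (-x ^ 2 / 2) = 1 := by rw [← exp_add]; simp [neg_div]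
  rw [mul_mul_mul_comm, mul_inv_cancel₀ hs, he, scaledPhi]
  ring

theorem psi_eq (x : ℝ) : psi x = (1 - x ^ 2) * scaledPhi x - x := by
  rw [psi, scaledPhi]
  ring

theorem psi_hasDerivAt (x : ℝ) :
    HasDerivAt psi (-(x * (1 + x ^ 2)) * scaledPhi x - x ^ 2) x := by
  have h := (((hasDerivAt_pow 2 x).const_sub 1).mul (scaledPhi_hasDerivAt x)).sub (hasDerivAt_id x)
  rw [show psi = _ from funext psi_eq]
  refine h.congr_deriv ?_
  simp only [Nat.cast_ofNat]
  ring

theorem psi_continuous : Continuous psi :=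
  continuous_iff_continuousAt.2 fun x => (psi_hasDerivAt x).continuousAt

theorem psi_strictAntiOn : StrictAntiOn psi (Ioi 0) := by
  refine strictAntiOn_of_hasDerivWithinAt_neg (convex_Ioi 0) psi_continuous.continuousOn
    (fun x _ => (psi_hasDerivAt x).hasDerivWithinAt) fun x hx => ?_
  rw [interior_Ioi] at hx
  have hx : 0 < x := hx
  linarith [mul_pos (mul_pos hx (by positivity : (0 : ℝ) < 1 + x ^ 2)) (scaledPhi_pos x),
    sq_nonneg x]

theorem stmt0 :
    ContinuousOn psi (Set.Ioi 0) ∧ StrictAntiOn psi (Set.Ioi 0) ∧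
      ∃! b : ℝ, b ∈ Set.Ioi (0 : ℝ) ∧ psi b = 0 := by
  refine ⟨psi_continuous.continuousOn, psi_strictAntiOn, ?_⟩
  have hpsi0 : 0 < psi 0 := by simpa [psi_eq] using scaledPhi_pos 0
  have hpsi1 : psi 1 = -1 := by simp [psi_eq]
  obtain ⟨b, hb, hb0⟩ := intermediate_value_Ioo' zero_le_one psi_continuous.continuousOn
    (show (0 : ℝ) ∈ Ioo (psi 1) (psi 0) from ⟨by rw [hpsi1]; norm_num, hpsi0⟩)
  exact ⟨b, ⟨hb.1, hb0⟩, fun y hy => psi_strictAntiOn.injOn hy.1 hb.1 (hy.2.trans hb0.symm)⟩
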